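/- Let P be a Poisson n-Lie algebra whose associative part contains a nonzero idempotent e (e·e = e, e ≠ 0). Then e lies in the center of the n-Lie algebra (P, [−,…,−]): [e, x₂, …, xₙ] = 0 for all x₂,…,xₙ ∈ P. -/
import Mathlib

/-- In a Poisson `n`-Lie algebra over a field of characteristic zero, any
nonzero idempotent `e` of the associative part lies in the center of the
underlying `n`-Lie algebra: `[e, x₂, …, xₙ] = 0`. Here the arity is
`n = m + 1`. -/
theorem idempotent_in_nLie_center
    (F P : Type*) [Field F] [CharZero F] [CommRing P] [Algebra F P] (m : ℕ)
    (br : AlternatingMap F P P (Fin (m + 1)))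
    (hFI : ∀ (x : Fin m → P) (y : Fin (m + 1) → P),
      br (Fin.snoc x (br y)) =
        ∑ i, br (Function.update y i (br (Fin.snoc x (y i)))))
    (hLeib : ∀ (u v : P) (x : Fin m → P),
      br (Fin.cons (u * v) x) = u * br (Fin.cons v x) + v * br (Fin.cons u x))
    (e : P) (he : e * e = e) (hne : e ≠ 0) :
    ∀ x : Fin m → P, br (Fin.cons e x) = 0 := by
  intro x
  have h := hLeib e e x
  rw [he] at h
  linear_combination (1 - 2*e) * h - 4 * (br (Fin.cons e x)) * he
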